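/- Let t ≥ 2, ω a primitive t-th root of unity, n ≥ tm+1, and Y=(y_1,…,y_m). For a nonnegative integer r, the identity h_r(x_1,…,x_{n−tm}, Y, ωY, …, ω^{t−1}Y) = h_r(x_1,…,x_{n−tm}) holds (as an identity of functions of x_1,…,x_{n−tm},y_1,…,y_m) if and only if 0 ≤ r ≤ t−1. -/

import Mathlib

open scoped BigOperators

noncomputable section

variable {K : Type} [Field K]

/-- Complete homogeneous symmetric polynomial of degree `m` in the list of variables `X`. -/
def hh : ℕ → List K → K
  | 0, _ => 1
  | _ + 1, [] => 0
  | m + 1, x :: xs => x * hh m (x :: xs) + hh (m + 1) xs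
  termination_by m X => (m, X.length)

/-- `h` indexed by an integer: zero for a negative index. -/
def hz (m : ℤ) (X : List K) : K := if 0 ≤ m then hh m.toNat X else 0

def invList (X : List K) : List K := X.map (·⁻¹)
def negList (X : List K) : List K := X.map (fun x => -x)
def powList (X : List K) (e : ℕ) : List K := X.map (· ^ e)

/-- the variables `(X, ωX, ω²X, …, ω^{t-1}X)`. -/
def twistList (t : ℕ) (ω : K) (X : List K) : List K :=
  (List.range t).flatMap fun k => X.map (fun x => ω ^ k * x)

/-- Schur polynomial (Jacobi–Trudi, `N × N` determinant). -/
def schur (lam : ℕ → ℕ) (N : ℕ) (X : List K) : K :=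
  Matrix.det (Matrix.of fun i j : Fin N => hz ((lam i : ℤ) - i + j) X)

/-- Skew Schur polynomial. -/
def skewSchur (lam mu : ℕ → ℕ) (N : ℕ) (X : List K) : K :=
  Matrix.det (Matrix.of fun i j : Fin N => hz ((lam i : ℤ) - (mu j : ℤ) - i + j) X)

/-- Symplectic character `sp_λ(X)`. -/
def spChar (lam : ℕ → ℕ) (N : ℕ) (X : List K) : K :=
  (2 : K)⁻¹ * Matrix.det (Matrix.of fun i j : Fin N =>
    hz ((lam i : ℤ) - i + j) (X ++ invList X) + hz ((lam i : ℤ) - i - j) (X ++ invList X))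

/-- Odd orthogonal character `so_λ(X)`. -/
def soChar (lam : ℕ → ℕ) (N : ℕ) (X : List K) : K :=
  Matrix.det (Matrix.of fun i j : Fin N =>
    hz ((lam i : ℤ) - i + j) (X ++ invList X ++ [1]) -
      hz ((lam i : ℤ) - i - j - 2) (X ++ invList X ++ [1]))

/-- Even orthogonal character `oe_λ(X)`. -/
def oeChar (lam : ℕ → ℕ) (N : ℕ) (X : List K) : K :=
  Matrix.det (Matrix.of fun i j : Fin N =>
    hz ((lam i : ℤ) - i + j) (X ++ invList X) -
      hz ((lam i : ℤ) - i - j - 2) (X ++ invList X))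

/-- Universal even orthogonal character `𝔬_λ(Z)`. -/
def uo (lam : ℕ → ℕ) (N : ℕ) (Z : List K) : K :=
  Matrix.det (Matrix.of fun i j : Fin N =>
    hz ((lam i : ℤ) - i + j) Z - hz ((lam i : ℤ) - i - j - 2) Z)

/-- Universal symplectic character `𝔰𝔭_λ(Z)`. -/
def usp (lam : ℕ → ℕ) (N : ℕ) (Z : List K) : K :=
  (2 : K)⁻¹ * Matrix.det (Matrix.of fun i j : Fin N =>
    hz ((lam i : ℤ) - i + j) Z + hz ((lam i : ℤ) - i - j) Z)

/-- Universal odd orthogonal character `𝔰𝔬_λ(Z)`. -/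
def uso (lam : ℕ → ℕ) (N : ℕ) (Z : List K) : K :=
  Matrix.det (Matrix.of fun i j : Fin N =>
    hz ((lam i : ℤ) - i + j) Z + hz ((lam i : ℤ) - i - j - 1) Z)

/-- The variant `𝔰𝔬⁻_λ(Z)`. -/
def usoNeg (lam : ℕ → ℕ) (N : ℕ) (Z : List K) : K :=
  Matrix.det (Matrix.of fun i j : Fin N =>
    hz ((lam i : ℤ) - i + j) Z - hz ((lam i : ℤ) - i - j - 1) Z)

/-- beta-set `β(λ,m) = (λ_1+m-1, …, λ_m)`, as a (decreasing) list. -/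
def betaList (lam : ℕ → ℕ) (m : ℕ) : List ℕ :=
  (List.range m).map fun i => lam i + (m - 1 - i)

/-- the number `n_i(λ,m)` of elements of `β(λ,m)` congruent to `i` mod `s`. -/
def nres (lam : ℕ → ℕ) (m s i : ℕ) : ℕ :=
  ((betaList lam m).filter fun b => b % s = i).length

def sortDesc (L : List ℕ) : List ℕ := List.insertionSort (· ≥ ·) L

/-- the `s`-core of `λ`, computed from `β(λ,m)`. -/
def coreP (lam : ℕ → ℕ) (m s : ℕ) : ℕ → ℕ := fun k =>
  let L := sortDesc ((List.range s).flatMap fun i =>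
    (List.range (nres lam m s i)).map fun j => s * j + i)
  if k < m then L.getD k 0 + k + 1 - m else 0

/-- the `i`-th member `λ^{(i)}` of the `s`-quotient of `λ`, computed from `β(λ,m)`. -/
def quotP (lam : ℕ → ℕ) (m s i : ℕ) : ℕ → ℕ := fun k =>
  let L := sortDesc (((betaList lam m).filter fun b => b % s = i).map fun b => b / s)
  if k < L.length then L.getD k 0 + k + 1 - L.length else 0

/-- conjugate partition (`N` a bound on the number of parts). -/
def conjB (f : ℕ → ℕ) (N k : ℕ) : ℕ := ((Finset.range N).filter fun j => k < f j).card

/-- Frobenius rank. -/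
def frank (f : ℕ → ℕ) (N : ℕ) : ℕ := ((Finset.range N).filter fun i => i + 1 ≤ f i).card

/-- number of nonzero parts (`N` a bound on the number of parts). -/
def plen (f : ℕ → ℕ) (N : ℕ) : ℕ := ((Finset.range N).filter fun i => 0 < f i).card

/-- sum of the parts (`N` a bound on the number of parts). -/
def psum (f : ℕ → ℕ) (N : ℕ) : ℕ := ∑ i ∈ Finset.range N, f i

def IsSelfConj (f : ℕ → ℕ) (N : ℕ) : Prop := ∀ k, f k = conjB f N k

/-- symplectic partition: `(α | α+1)` in Frobenius coordinates. -/
def IsSymplecticP (f : ℕ → ℕ) (N : ℕ) : Prop := ∀ i < frank f N, conjB f N i = f i + 1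

/-- orthogonal partition: `(α+1 | α)` in Frobenius coordinates. -/
def IsOrthogonalP (f : ℕ → ℕ) (N : ℕ) : Prop := ∀ i < frank f N, f i = conjB f N i + 1

/-- the partition `(λ, -μ)_N`. -/
def negConcat (f g : ℕ → ℕ) (N : ℕ) : ℕ → ℕ := fun k =>
  if k < N then g 0 + f k - g (N - 1 - k) else 0

/-- number of inversions: pairs `i < j` with `L_i < L_j`. -/
def invCount (L : List ℕ) : ℕ :=
  (Finset.univ.filter fun p : Fin L.length × Fin L.length =>
    (p.1 : ℕ) < (p.2 : ℕ) ∧ L.get p.1 < L.get p.2).card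

def sgnList (L : List ℕ) : ℤ := (-1) ^ invCount L

/-- rearrangement of `β(λ,m)`: residue classes mod `s` listed in the order given by `E`
followed by the remaining residues increasingly, decreasingly within each class. -/
def blockedList (E : List ℕ) (lam : ℕ → ℕ) (m s : ℕ) : List ℕ :=
  (E ++ (List.range s).filter fun a => a ∉ E).flatMap fun e =>
    sortDesc ((betaList lam m).filter fun b => b % s = e)

/-- sign of the permutation `σ_λ^E`. -/
def sgnSigmaE (E : List ℕ) (lam : ℕ → ℕ) (m s : ℕ) : ℤ := sgnList (blockedList E lam m s)

/-- sign of the permutation `σ_λ`. -/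
def sgnSigma (lam : ℕ → ℕ) (m s : ℕ) : ℤ := sgnSigmaE [] lam m s

/-- staircase partition `(k, k-1, …, 1)`. -/
def stair (k : ℕ) : ℕ → ℕ := fun i => k - i

/-- a field containing `n` generic variables. -/
abbrev FF (n : ℕ) : Type := FractionRing (MvPolynomial (Fin n) ℂ)

/-- the `n` generic variables of `FF n`. -/
def genX (n : ℕ) : List (FF n) :=
  List.ofFn fun i : Fin n => algebraMap (MvPolynomial (Fin n) ℂ) (FF n) (MvPolynomial.X i)

end

/-!
The generating series `H_L = ∑ h_r(L) X^r` is the inverse of `∏_{a ∈ L} (1 - a X)`. Since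
`∏_k (1 - ω^k y X) = 1 - y^t X^t`, appending `(Y, ωY, …, ω^{t-1}Y)` to `x` multiplies `H_x` by
`∏_y (1 - y^t X^t)⁻¹ ≡ 1 mod X^t`, which leaves the coefficients of degree `< t` unchanged.
Conversely, for `x = (1, 0, …, 0)` and `Y = (1, 0, …, 0)` the two series are `1 / (1 - X)` and
`1 / ((1 - X) (1 - X^t))`, whose coefficients of degree `r` are `1` and `⌊r/t⌋ + 1`.
-/

open PowerSeries

lemma IsPrimitiveRoot.prod_range_one_sub_pow_mul {R : Type*} [CommRing R] [IsDomain R]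
    {ω : R} {t : ℕ} (hω : IsPrimitiveRoot ω t) (ht : 0 < t) (a : R) :
    ((List.range t).map fun k => 1 - ω ^ k * a).prod = 1 - a ^ t := by
  have h := congrArg (Polynomial.eval 1) (X_pow_sub_C_eq_prod hω ht (rfl : a ^ t = a ^ t))
  simp only [Polynomial.eval_sub, Polynomial.eval_pow, Polynomial.eval_X, Polynomial.eval_C,
    one_pow, Polynomial.eval_prod] at h
  rw [h, Finset.prod_eq_multiset_prod]
  rfl

lemma List.dvd_prod_sub_one {R : Type*} [CommRing R] {a : R} {L : List R}
    (h : ∀ g ∈ L, a ∣ g - 1) : a ∣ L.prod - 1 := by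
  induction L with
  | nil => simp
  | cons g L ih =>
    rw [List.forall_mem_cons] at h
    rw [List.prod_cons, show g * L.prod - 1 = g * (L.prod - 1) + (g - 1) by ring]
    exact dvd_add (dvd_mul_of_dvd_right (ih h.2) g) h.1

lemma PowerSeries.coeff_mul_of_X_pow_dvd_sub_one {R : Type*} [CommRing R] {f g : R⟦X⟧} {t r : ℕ}
    (hg : X ^ t ∣ g - 1) (hr : r < t) : coeff r (f * g) = coeff r f := by
  have : coeff r (f * (g - 1)) = 0 := X_pow_dvd_iff.mp (dvd_mul_of_dvd_right hg f) r hr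
  rwa [mul_sub, mul_one, map_sub, sub_eq_zero] at this

section

variable {K : Type} [Field K]

lemma hh_zero (L : List K) : hh 0 L = 1 := by rw [hh]

lemma hh_succ_nil (r : ℕ) : hh (r + 1) ([] : List K) = 0 := by rw [hh]

lemma hh_succ_cons (r : ℕ) (x : K) (xs : List K) :
    hh (r + 1) (x :: xs) = x * hh r (x :: xs) + hh (r + 1) xs := by rw [hh]

def hhSeries (L : List K) : K⟦X⟧ := mk fun r => hh r L

noncomputable def prodOneSub (L : List K) : K⟦X⟧ := (L.map fun a => 1 - C a * X).prod

lemma prodOneSub_append (L M : List K) : prodOneSub (L ++ M) = prodOneSub L * prodOneSub M := by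
  simp [prodOneSub]

lemma hhSeries_nil : hhSeries ([] : List K) = 1 := by
  ext (_ | r) <;> simp [hhSeries, hh_zero, hh_succ_nil, coeff_one]

lemma hhSeries_cons_mul (x : K) (xs : List K) :
    hhSeries (x :: xs) * (1 - C x * X) = hhSeries xs := by
  ext (_ | r)
  · simp [hhSeries, hh_zero, mul_sub]
  · rw [mul_sub, mul_one, map_sub, mul_left_comm, ← mul_assoc, coeff_succ_mul_X, coeff_C_mul]
    simp only [hhSeries, coeff_mk, hh_succ_cons]
    ring

lemma hhSeries_mul_prodOneSub (L : List K) : hhSeries L * prodOneSub L = 1 := by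
  induction L with
  | nil => simp [hhSeries_nil, prodOneSub]
  | cons x xs ih =>
    rw [prodOneSub, List.map_cons, List.prod_cons, ← mul_assoc, hhSeries_cons_mul]
    exact ih

lemma hhSeries_eq_of_mul_prodOneSub {L : List K} {f : K⟦X⟧} (h : f * prodOneSub L = 1) :
    hhSeries L = f :=
  left_inv_eq_right_inv (hhSeries_mul_prodOneSub L) (mul_comm f _ ▸ h)

lemma hhSeries_eq_hhSeries_append_mul (L M : List K) :
    hhSeries L = hhSeries (L ++ M) * prodOneSub M :=
  hhSeries_eq_of_mul_prodOneSub <| by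
    rw [mul_assoc, mul_comm (prodOneSub M), ← prodOneSub_append, hhSeries_mul_prodOneSub]

lemma prodOneSub_twistList {ω : K} {t : ℕ} (hω : IsPrimitiveRoot ω t) (ht : 0 < t) (Y : List K) :
    prodOneSub (twistList t ω Y) = (Y.map fun y => 1 - C (y ^ t) * X ^ t).prod := by
  have hω' : IsPrimitiveRoot (C ω : K⟦X⟧) t := hω.map_of_injective C_injective
  induction Y with
  | nil => simp [prodOneSub, twistList, List.flatMap_def]
  | cons y Y ih =>
    rw [List.map_cons, List.prod_cons, ← ih, map_pow, ← mul_pow,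
      ← hω'.prod_range_one_sub_pow_mul ht]
    simp only [prodOneSub, twistList, List.flatMap_def, List.map_flatten, List.prod_flatten,
      List.map_map, ← List.prod_map_mul]
    congr 1
    refine List.map_congr_left fun k _ => ?_
    simp [mul_assoc]

lemma hh_append_twistList_of_lt {ω : K} {t r : ℕ} (hω : IsPrimitiveRoot ω t) (hr : r < t)
    (x Y : List K) : hh r (x ++ twistList t ω Y) = hh r x := by
  have hdvd : X ^ t ∣ prodOneSub (twistList t ω Y) - 1 := by
    rw [prodOneSub_twistList hω (by omega)]
    refine List.dvd_prod_sub_one fun g hg => ?_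
    obtain ⟨y, -, rfl⟩ := List.mem_map.mp hg
    exact ⟨-C (y ^ t), by ring⟩
  have := congrArg (coeff r) (hhSeries_eq_hhSeries_append_mul x (twistList t ω Y))
  rw [coeff_mul_of_X_pow_dvd_sub_one hdvd hr] at this
  simpa [hhSeries] using this.symm

lemma mk_div_add_one_mul_one_sub_X_pow {t : ℕ} (ht : 0 < t) :
    (mk fun r => ((r / t + 1 : ℕ) : K)) * (1 - X ^ t) = mk 1 := by
  ext r
  rw [mul_sub, mul_one, map_sub, coeff_mul_X_pow']
  split_ifs with h
  · have : r / t = (r - t) / t + 1 := by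
      rw [← Nat.sub_add_cancel h, Nat.add_div_right _ ht, Nat.add_sub_cancel]
    simp [this]
  · simp [Nat.div_eq_of_lt (not_le.mp h)]

lemma prodOneSub_one_cons_replicate_zero (p : ℕ) :
    prodOneSub (1 :: List.replicate p (0 : K)) = 1 - X := by
  simp [prodOneSub, List.map_replicate]

lemma hhSeries_one_cons_replicate_zero (p : ℕ) :
    hhSeries (1 :: List.replicate p (0 : K)) = mk 1 :=
  hhSeries_eq_of_mul_prodOneSub <| by
    rw [prodOneSub_one_cons_replicate_zero, mk_one_mul_one_sub_eq_one]

lemma hhSeries_one_cons_replicate_zero_append_twistList {ω : K} {t : ℕ}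
    (hω : IsPrimitiveRoot ω t) (ht : 0 < t) (p q : ℕ) :
    hhSeries ((1 :: List.replicate p 0) ++ twistList t ω (1 :: List.replicate q 0))
      = mk fun r => ((r / t + 1 : ℕ) : K) :=
  hhSeries_eq_of_mul_prodOneSub <| by
    have htwist : prodOneSub (twistList t ω (1 :: List.replicate q 0)) = 1 - X ^ t := by
      simp [prodOneSub_twistList hω ht, List.map_replicate, zero_pow ht.ne']
    rw [prodOneSub_append, htwist, prodOneSub_one_cons_replicate_zero, mul_comm (1 - X),
      ← mul_assoc, mk_div_add_one_mul_one_sub_X_pow ht, mk_one_mul_one_sub_eq_one]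

end

/-- `h_r(x_1, …, x_{n-tm}, Y, ωY, …, ω^{t-1}Y) = h_r(x_1, …, x_{n-tm})`
holds iff `0 ≤ r ≤ t-1`. -/
theorem stmt16 (t m n : ℕ) (ht : 2 ≤ t) (hm : 1 ≤ m) (hn : t * m + 1 ≤ n)
    (ω : ℂ) (hω : IsPrimitiveRoot ω t) (r : ℕ) :
    (∀ x Y : List ℂ, x.length = n - t * m → Y.length = m →
        hh r (x ++ twistList t ω Y) = hh r x) ↔ r ≤ t - 1 := by
  constructor
  · intro hid
    by_contra! hr
    have key := hid (1 :: List.replicate (n - t * m - 1) 0) (1 :: List.replicate (m - 1) 0)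
      (by simp; omega) (by simp; omega)
    have hlhs := congrArg (coeff r) (hhSeries_one_cons_replicate_zero_append_twistList hω
      (by omega) (n - t * m - 1) (m - 1))
    have hrhs := congrArg (coeff r) (hhSeries_one_cons_replicate_zero (K := ℂ) (n - t * m - 1))
    simp only [hhSeries, coeff_mk, Pi.one_apply] at hlhs hrhs
    rw [key, hrhs] at hlhs
    have : r / t + 1 = 1 := by exact_mod_cast hlhs.symm
    have : 0 < r / t := Nat.div_pos (by omega) (by omega)
    omega
  · intro hr x Y _ _
    exact hh_append_twistList_of_lt hω (by omega) x Y
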